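/- arXiv:1301.7112 — 6 statements merged into one kernel-verified Lean document; each statement's English description precedes it below -/
import Mathlib

section
/- Let E be a Π⁰₁ equivalence relation on ℕ with computable approximations E_t as above, and define E'_t = E_t ∩ [0,t]². Define f by recursion: f(x,n) = f(z,n) where z = min of the E'_{max(x,n)}-class of x, if z < x; and f(x,n) = x otherwise. Then for all x, y: E x y if and only if for all n, f(x,n) = f(y,n). -/
/-- `Et` is a uniformly computable family of approximations to the equivalence relation `E`:
decreasing in `t`, an equivalence relation on `{0,…,t}` at stage `t`, and intersecting to `E`. -/
def IsApprox (E : ℕ → ℕ → Prop) (Et : ℕ → ℕ → ℕ → Bool) : Prop :=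
  Computable (fun p : ℕ × ℕ × ℕ => Et p.1 p.2.1 p.2.2) ∧
  (∀ t x y, Et (t + 1) x y = true → Et t x y = true) ∧
  (∀ t, (∀ x ≤ t, Et t x x = true) ∧
        (∀ x ≤ t, ∀ y ≤ t, Et t x y = true → Et t y x = true) ∧
        (∀ x ≤ t, ∀ y ≤ t, ∀ z ≤ t,
          Et t x y = true → Et t y z = true → Et t x z = true)) ∧
  (∀ x y, E x y ↔ ∀ t, Et t x y = true)

/-- The least element of the `E'_s`-class of `x`, where `E'_s = E_s ∩ [0,s]²`. -/
noncomputable def minCl (Et : ℕ → ℕ → ℕ → Bool) (s x : ℕ) : ℕ :=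
  sInf {y | y ≤ s ∧ Et s x y = true}

/-- With `f` defined by the recursion `f(x,n) = f(z,n)` for `z = min[x]_{E'_{max(x,n)}}` if
`z < x`, and `f(x,n) = x` otherwise, we have `E x y ↔ ∀ n, f(x,n) = f(y,n)`. -/
theorem approx_min_function_characterizes (E : ℕ → ℕ → Prop) (hE : Equivalence E)
    (Et : ℕ → ℕ → ℕ → Bool) (hA : IsApprox E Et) (f : ℕ × ℕ → ℕ)
    (hf : ∀ x n, f (x, n) =
      if minCl Et (max x n) x < x then f (minCl Et (max x n) x, n) else x) :
    ∀ x y, E x y ↔ ∀ n, f (x, n) = f (y, n) := by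
  obtain ⟨-, hdec, heq, hiff⟩ := hA
  -- downward closure of the approximations
  have hdown : ∀ {s s' x y}, s ≤ s' → Et s' x y = true → Et s x y = true := by
    intro s s' x y h
    induction h with
    | refl => exact id
    | step _ ih => exact fun hh => ih (hdec _ _ _ hh)
  -- basic facts about minCl
  have hmin : ∀ s x, x ≤ s →
      minCl Et s x ≤ x ∧ minCl Et s x ≤ s ∧ Et s x (minCl Et s x) = true := by
    intro s x hx
    have hxx : x ∈ {y | y ≤ s ∧ Et s x y = true} := ⟨hx, (heq s).1 x hx⟩
    have h1 : minCl Et s x ≤ x := Nat.sInf_le hxx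
    have h2 := Nat.sInf_mem (⟨x, hxx⟩ : {y | y ≤ s ∧ Et s x y = true}.Nonempty)
    exact ⟨h1, h2.1, h2.2⟩
  -- f(x,n) ≤ x and Et n x f(x,n) when x ≤ n
  have hB : ∀ x, ∀ n, x ≤ n → f (x, n) ≤ x ∧ Et n x (f (x, n)) = true := by
    intro x
    induction x using Nat.strong_induction_on with
    | _ x ih =>
      intro n hxn
      obtain ⟨hz1, hz2, hz3⟩ := hmin (max x n) x (le_max_left _ _)
      rw [hf]
      by_cases h : minCl Et (max x n) x < x
      · simp only [h, if_true]
        obtain ⟨ih1, ih2⟩ := ih _ h n (h.le.trans hxn)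
        have hxz : Et n x (minCl Et (max x n) x) = true :=
          hdown (le_max_right x n) hz3
        exact ⟨ih1.trans hz1, (heq n).2.2 x hxn _ (hz1.trans hxn) _
          (ih1.trans (hz1.trans hxn)) hxz ih2⟩
      · simp only [h, if_false]
        exact ⟨le_refl x, (heq n).1 x hxn⟩
  -- forward key lemma
  have hF : ∀ y, ∀ x n, x ≤ y → Et (max y n) x y = true → f (x, n) = f (y, n) := by
    intro y
    induction y using Nat.strong_induction_on with
    | _ y ih =>
      intro x n hxy hxyE
      rcases eq_or_lt_of_le hxy with rfl | hlt
      · rfl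
      set s := max y n with hs
      have hys : y ≤ s := le_max_left _ _
      have hxs : x ≤ s := hxy.trans hys
      obtain ⟨hzy1, hzy2, hzy3⟩ := hmin s y hys
      set zy := minCl Et s y with hzy
      have hsymm : Et s y x = true := (heq s).2.1 x hxs y hys hxyE
      have hzyx : zy ≤ x := Nat.sInf_le ⟨hxs, hsymm⟩
      have hfy : f (y, n) = f (zy, n) := by
        rw [hf y n]
        simp [← hs, ← hzy, show zy < y from lt_of_le_of_lt hzyx hlt]
      have hxzy : Et s x zy = true :=
        (heq s).2.2 x hxs y hys zy hzy2 hxyE hzy3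
      set s' := max x n with hs'
      have hss' : s' ≤ s := max_le (hlt.le.trans hys) (le_max_right y n)
      have hx' : Et s' x zy = true := hdown hss' hxzy
      obtain ⟨hzx1, hzx2, hzx3⟩ := hmin s' x (le_max_left _ _)
      set zx := minCl Et s' x with hzx
      have hzxzy : zx ≤ zy := Nat.sInf_le ⟨hzyx.trans (le_max_left x n), hx'⟩
      by_cases hc : zx < x
      · have hfx : f (x, n) = f (zx, n) := by
          rw [hf x n]; simp [← hs', ← hzx, hc]
        have h1 : Et s' zx x = true :=
          (heq s').2.1 x (le_max_left _ _) zx (hzx1.trans (le_max_left _ _)) hzx3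
        have h2 : Et s' zx zy = true :=
          (heq s').2.2 zx (hzx1.trans (le_max_left _ _)) x (le_max_left _ _) zy
            (hzyx.trans (le_max_left _ _)) h1 hx'
        have h3 : Et (max zy n) zx zy = true :=
          hdown (max_le_max hzyx le_rfl) h2
        have hrec := ih zy (lt_of_le_of_lt hzyx hlt) zx n hzxzy h3
        rw [hfx, hfy, hrec]
      · have hzxx : zx = x := le_antisymm hzx1 (not_lt.mp hc)
        have hzyeq : zy = x := le_antisymm hzyx (hzxx ▸ hzxzy)
        rw [hfy, hzyeq]
  intro x y
  constructor
  · intro hxy n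
    have hall := (hiff x y).1 hxy
    rcases le_total x y with h | h
    · exact hF y x n h (hall _)
    · have hall' := (hiff y x).1 (hE.symm hxy)
      exact (hF x y n h (hall' _)).symm
  · intro hfe
    rw [hiff]
    intro t
    set n := max t (max x y) with hn
    have hxn : x ≤ n := le_trans (le_max_left x y) (le_max_right _ _)
    have hyn : y ≤ n := le_trans (le_max_right x y) (le_max_right _ _)
    obtain ⟨hx1, hx2⟩ := hB x n hxn
    obtain ⟨hy1, hy2⟩ := hB y n hyn
    have hmain : Et n x y = true := by
      have h1 : Et n (f (x, n)) y = true := by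
        rw [hfe n]
        exact (heq n).2.1 y hyn _ (hy1.trans hyn) hy2
      exact (heq n).2.2 x hxn _ (hx1.trans hxn) y hyn hx2 h1
    exact hdown (le_max_left _ _) hmain
end

section
/- With f as defined from a Π⁰₁ equivalence relation E (f(x,n) approximating min[x]_E), if f(x,n) = x for some n, then x is the least element of its E-equivalence class. -/
/-- If `f(x,n) = x` for some `n`, then `x` is the least element of its `E`-class. -/
theorem fixed_point_is_least (E : ℕ → ℕ → Prop) (hE : Equivalence E)
    (Et : ℕ → ℕ → ℕ → Bool) (hA : IsApprox E Et) (f : ℕ × ℕ → ℕ)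
    (hf : ∀ x n, f (x, n) =
      if minCl Et (max x n) x < x then f (minCl Et (max x n) x, n) else x) :
    ∀ x, (∃ n, f (x, n) = x) → ∀ y, E x y → x ≤ y := by
  obtain ⟨_, _, _, hEiff⟩ := hA
  rintro x ⟨n, hfx⟩ y hxy
  by_contra h
  push_neg at h
  have hmem : y ∈ {z | z ≤ max x n ∧ Et (max x n) x z = true} :=
    ⟨le_trans h.le (le_max_left x n), (hEiff x y).mp hxy (max x n)⟩
  have hmin_le : minCl Et (max x n) x ≤ y := Nat.sInf_le hmem
  have hlt : minCl Et (max x n) x < x := lt_of_le_of_lt hmin_le h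
  have key : ∀ z, z < x → f (z, n) < x := by
    intro z
    induction z using Nat.strong_induction_on with
    | _ z ih =>
      intro hz
      rw [hf z n]
      split
      case isTrue hlt' => exact ih _ hlt' (lt_trans hlt' hz)
      case isFalse => exact hz
  have hk := key _ hlt
  rw [hf x n, if_pos hlt] at hfx
  omega
end

section
/- If E x y fails for a Π⁰₁ equivalence relation E, then there exists n > max(x,y) such that (x,y) ∉ E_n, and for such n, f(x,n) = min[x]_{E'_n} ≠ min[y]_{E'_n} = f(y,n). -/
/-- If `¬ E x y` then some `n > max x y` has `(x,y) ∉ E_n`, and for every such `n`,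
`f(x,n) = min[x]_{E'_n} ≠ min[y]_{E'_n} = f(y,n)`. -/
theorem not_equiv_separated (E : ℕ → ℕ → Prop) (hE : Equivalence E)
    (Et : ℕ → ℕ → ℕ → Bool) (hA : IsApprox E Et) (f : ℕ × ℕ → ℕ)
    (hf : ∀ x n, f (x, n) =
      if minCl Et (max x n) x < x then f (minCl Et (max x n) x, n) else x) :
    ∀ x y, ¬ E x y →
      (∃ n, max x y < n ∧ Et n x y = false) ∧
      (∀ n, max x y < n → Et n x y = false →
        f (x, n) = minCl Et n x ∧ f (y, n) = minCl Et n y ∧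
          minCl Et n x ≠ minCl Et n y) := by
  obtain ⟨-, hdec, hequiv, hiff⟩ := hA
  have hmono : ∀ {s t : ℕ}, s ≤ t → ∀ x y, Et t x y = true → Et s x y = true := by
    intro s t hst
    induction hst with
    | refl => exact fun x y h => h
    | step _ ih => exact fun x y h => ih x y (hdec _ x y h)
  intro x y hxy
  constructor
  · have : ¬ ∀ t, Et t x y = true := fun h => hxy ((hiff x y).mpr h)
    push_neg at this
    obtain ⟨t, ht⟩ := this
    refine ⟨max t (max x y + 1), ?_, ?_⟩
    · exact lt_of_lt_of_le (Nat.lt_succ_self _) (le_max_right _ _)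
    · rcases Bool.eq_false_or_eq_true (Et (max t (max x y + 1)) x y) with h | h
      · exact absurd (hmono (le_max_left _ _) x y h) ht
      · exact h
  · intro n hn hfalse
    have hx : x ≤ n := le_of_lt (lt_of_le_of_lt (le_max_left _ _) hn)
    have hy : y ≤ n := le_of_lt (lt_of_le_of_lt (le_max_right _ _) hn)
    obtain ⟨hrefl, hsym, htrans⟩ := hequiv n
    -- basic facts about minCl at stage n for a ≤ n
    have hmem : ∀ a, a ≤ n → minCl Et n a ∈ {y | y ≤ n ∧ Et n a y = true} := by
      intro a ha
      exact Nat.sInf_mem ⟨a, ha, hrefl a ha⟩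
    have hle : ∀ a, a ≤ n → minCl Et n a ≤ a := by
      intro a ha
      exact Nat.sInf_le ⟨ha, hrefl a ha⟩
    have hfix : ∀ a, a ≤ n → minCl Et n (minCl Et n a) = minCl Et n a := by
      intro a ha
      obtain ⟨hzn, hz⟩ := hmem a ha
      have hset : {y | y ≤ n ∧ Et n (minCl Et n a) y = true}
          = {y | y ≤ n ∧ Et n a y = true} := by
        ext w
        simp only [Set.mem_setOf_eq]
        constructor
        · rintro ⟨hwn, hw⟩
          exact ⟨hwn, htrans a ha (minCl Et n a) hzn w hwn hz hw⟩
        · rintro ⟨hwn, hw⟩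
          exact ⟨hwn, htrans (minCl Et n a) hzn a ha w hwn (hsym a ha _ hzn hz) hw⟩
      show sInf _ = _
      rw [hset]; rfl
    have hfval : ∀ a, a ≤ n → f (a, n) = minCl Et n a := by
      intro a ha
      have hmax : max a n = n := max_eq_right ha
      rw [hf a n, hmax]
      rcases lt_or_eq_of_le (hle a ha) with h | h
      · rw [if_pos h, hf (minCl Et n a) n, max_eq_right (hmem a ha).1, hfix a ha,
          if_neg (lt_irrefl _)]
      · rw [if_neg (by rw [h]; exact lt_irrefl a), h]
    refine ⟨hfval x hx, hfval y hy, ?_⟩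
    intro heq
    obtain ⟨hzn, hzx⟩ := hmem x hx
    obtain ⟨_, hzy⟩ := hmem y hy
    rw [heq] at hzx hzn
    have : Et n x y = true :=
      htrans x hx (minCl Et n y) hzn y hy hzx (hsym y hy _ hzn hzy)
    rw [hfalse] at this
    exact Bool.false_ne_true this
end

section
/- Given functions f, g : ℕ → ℕ, define trees T_f and T_g as the prefix-closures of {1^x 0^{f(x)} : x ∈ ℕ} ∪ {1^y : y ∈ ℕ} and similarly for g. Then T_f and T_g are isomorphic as trees if and only if f = g. -/
/-- `f` is an isomorphism of the subtrees `T` and `S`: a bijection preserving predecessor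
(`pred(wa) = w`, `pred(ε) = ε`, realized as `List.dropLast`). -/
def IsTreeIso {α : Type*} (T S : Set (List α)) (f : List α → List α) : Prop :=
  Set.BijOn f T S ∧ ∀ w ∈ T, f w.dropLast = (f w).dropLast

/-- The tree associated to `f : ℕ → ℕ`: the prefix closure of
`{1^x 0^{f x} : x ∈ ℕ} ∪ {1^y : y ∈ ℕ}`, i.e. all strings `1^x 0^m` with `m ≤ f x`. -/
def funTree (f : ℕ → ℕ) : Set (List (Fin 2)) :=
  {w | ∃ x m, m ≤ f x ∧ w = List.replicate x (1 : Fin 2) ++ List.replicate m (0 : Fin 2)}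

/-!
A tree isomorphism preserves depth and commutes with truncation, hence preserves the prefix
order. It fixes every spine node `1^x`: the image of `1^N` is a node `1^y 0^k` of depth `N`, and
for `N` beyond every branch `1^y 0^{g y}` with `y < x` this forces `x ≤ y`, so truncating at
depth `x` gives `φ (1^x) = 1^x`. As `1^x 0^m` has exactly the spine nodes `1^j`, `j ≤ x`, as
ancestors, `φ` then fixes every node of `T_f`, so `T_f = T_g` and `f = g`.
-/

namespace IsTreeIso

variable {α : Type*} {T S : Set (List α)} {φ : List α → List α}

theorem map_nil (h : IsTreeIso T S φ) (hT : [] ∈ T) : φ [] = [] := by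
  have hlen := congrArg List.length (h.2 [] hT)
  rw [List.dropLast_nil, List.length_dropLast] at hlen
  exact List.eq_nil_of_length_eq_zero (by omega)

variable (hT : ∀ w ∈ T, ∀ j, w.take j ∈ T)
include hT

theorem length_map (h : IsTreeIso T S φ) {w : List α} (hw : w ∈ T) :
    (φ w).length = w.length := by
  have hnil : [] ∈ T := by simpa using hT w hw 0
  induction w using List.reverseRecOn with
  | nil => rw [h.map_nil hnil]
  | append_singleton v a ih =>
    have hv : v ∈ T := by simpa using hT _ hw v.length
    have hne : φ (v ++ [a]) ≠ [] := fun h0 => by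
      simpa using h.1.injOn hw hnil (h0.trans (h.map_nil hnil).symm)
    have hlen := congrArg List.length (h.2 _ hw)
    rw [List.dropLast_concat, List.length_dropLast, ih hv] at hlen
    have := List.length_pos_of_ne_nil hne
    simp only [List.length_append, List.length_singleton]
    omega

theorem map_take (h : IsTreeIso T S φ) {w : List α} (hw : w ∈ T) (j : ℕ) :
    φ (w.take j) = (φ w).take j := by
  induction w using List.reverseRecOn with
  | nil => rw [List.take_nil, h.map_nil hw, List.take_nil]
  | append_singleton v a ih =>
    have hv : v ∈ T := by simpa using hT _ hw v.length
    have hlen := h.length_map hT hw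
    rw [List.length_append, List.length_singleton] at hlen
    have hpred := h.2 _ hw
    rw [List.dropLast_concat] at hpred
    obtain hj | hj := le_or_gt j v.length
    · rw [List.take_append_of_le_length hj, ih hv, hpred, List.dropLast_eq_take, List.take_take,
        hlen, Nat.add_sub_cancel, min_eq_left hj]
    · rw [List.take_of_length_le (by simpa using hj), List.take_of_length_le (by omega)]

theorem isPrefix_map_iff (h : IsTreeIso T S φ) {u w : List α} (hu : u ∈ T) (hw : w ∈ T) :
    φ u <+: φ w ↔ u <+: w := by
  rw [List.prefix_iff_eq_take, List.prefix_iff_eq_take, h.length_map hT hu, ← h.map_take hT hw]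
  exact ⟨fun e => h.1.injOn hu (hT w hw _) e, congrArg φ⟩

end IsTreeIso

/-- The node `1^x 0^m`. -/
def onesZeros (x m : ℕ) : List (Fin 2) := List.replicate x 1 ++ List.replicate m 0

theorem onesZeros_inj {x m y k : ℕ} : onesZeros x m = onesZeros y k ↔ x = y ∧ m = k := by
  refine ⟨fun h => ⟨?_, ?_⟩, fun ⟨hx, hm⟩ => hx ▸ hm ▸ rfl⟩
  · simpa [onesZeros, List.count_replicate] using congrArg (List.count 1) h
  · simpa [onesZeros, List.count_replicate] using congrArg (List.count 0) h

theorem length_onesZeros (x m : ℕ) : (onesZeros x m).length = x + m := by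
  simp [onesZeros]

theorem take_onesZeros (x m j : ℕ) :
    (onesZeros x m).take j = onesZeros (min j x) (min (j - x) m) := by
  simp [onesZeros, List.take_append, List.take_replicate]

theorem onesZeros_isPrefix_iff {j x m : ℕ} : onesZeros j 0 <+: onesZeros x m ↔ j ≤ x := by
  rw [List.prefix_iff_eq_take, length_onesZeros, Nat.add_zero, take_onesZeros, onesZeros_inj]
  omega

theorem mem_funTree {f : ℕ → ℕ} {w : List (Fin 2)} :
    w ∈ funTree f ↔ ∃ x m, m ≤ f x ∧ w = onesZeros x m :=
  Iff.rfl

theorem onesZeros_mem_funTree {f : ℕ → ℕ} {x m : ℕ} : onesZeros x m ∈ funTree f ↔ m ≤ f x := by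
  refine ⟨?_, fun hm => ⟨x, m, hm, rfl⟩⟩
  rintro ⟨y, k, hk, hxy⟩
  obtain ⟨rfl, rfl⟩ := onesZeros_inj.1 hxy
  exact hk

theorem take_mem_funTree {f : ℕ → ℕ} : ∀ w ∈ funTree f, ∀ j, w.take j ∈ funTree f := by
  intro w hw j
  obtain ⟨x, m, hm, rfl⟩ := mem_funTree.1 hw
  rw [take_onesZeros]
  obtain hxj | hjx := le_or_gt x j
  · rw [min_eq_right hxj]
    exact onesZeros_mem_funTree.2 ((min_le_right _ _).trans hm)
  · rw [Nat.sub_eq_zero_of_le hjx.le, zero_min]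
    exact onesZeros_mem_funTree.2 (Nat.zero_le _)

theorem funTree_injective : Function.Injective funTree := fun f g h => by
  funext x
  have hf : onesZeros x (f x) ∈ funTree g := h ▸ onesZeros_mem_funTree.2 le_rfl
  have hg : onesZeros x (g x) ∈ funTree f := h ▸ onesZeros_mem_funTree.2 le_rfl
  exact le_antisymm (onesZeros_mem_funTree.1 hf) (onesZeros_mem_funTree.1 hg)

namespace IsTreeIso

variable {f g : ℕ → ℕ} {φ : List (Fin 2) → List (Fin 2)}

theorem map_onesZeros_zero (h : IsTreeIso (funTree f) (funTree g) φ) (x : ℕ) :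
    φ (onesZeros x 0) = onesZeros x 0 := by
  set N := x + (Finset.range x).sup (fun y => y + g y) + 1
  have hN_mem : onesZeros N 0 ∈ funTree f := onesZeros_mem_funTree.2 (Nat.zero_le _)
  obtain ⟨y, k, hk, hy⟩ := mem_funTree.1 (h.1.mapsTo hN_mem)
  have hlen := h.length_map take_mem_funTree hN_mem
  rw [hy, length_onesZeros, length_onesZeros] at hlen
  have hxy : x ≤ y := by
    by_contra! hyx
    have := Finset.le_sup (f := fun y => y + g y) (Finset.mem_range.2 hyx)
    omega
  have htake := h.map_take take_mem_funTree hN_mem x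
  rwa [hy, take_onesZeros, take_onesZeros, min_eq_left (by omega : x ≤ N), min_eq_left hxy,
    Nat.sub_eq_zero_of_le (by omega : x ≤ N), Nat.sub_eq_zero_of_le hxy, zero_min, zero_min]
    at htake

theorem eqOn_id_funTree (h : IsTreeIso (funTree f) (funTree g) φ) :
    Set.EqOn φ id (funTree f) := by
  intro w hw
  obtain ⟨x, m, -, rfl⟩ := mem_funTree.1 hw
  obtain ⟨y, k, -, hy⟩ := mem_funTree.1 (h.1.mapsTo hw)
  have hxy : x = y := eq_of_forall_le_iff fun j =>
    calc j ≤ x ↔ onesZeros j 0 <+: onesZeros x m := onesZeros_isPrefix_iff.symm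
      _ ↔ φ (onesZeros j 0) <+: φ (onesZeros x m) :=
        (h.isPrefix_map_iff take_mem_funTree (onesZeros_mem_funTree.2 (Nat.zero_le _)) hw).symm
      _ ↔ j ≤ y := by rw [h.map_onesZeros_zero, hy, onesZeros_isPrefix_iff]
  have hlen := h.length_map take_mem_funTree hw
  rw [hy, length_onesZeros, length_onesZeros] at hlen
  rw [hy, id, onesZeros_inj]
  omega

end IsTreeIso

/-- `T_f` and `T_g` are isomorphic as trees if and only if `f = g`. -/
theorem funTree_iso_iff (f g : ℕ → ℕ) :
    (∃ φ, IsTreeIso (funTree f) (funTree g) φ) ↔ f = g := by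
  constructor
  · rintro ⟨φ, h⟩
    exact funTree_injective (h.eqOn_id_funTree.image_eq_self.symm.trans h.1.image_eq)
  · rintro rfl
    exact ⟨id, Set.bijOn_id _, fun _ _ => rfl⟩
end

section
/- For every Π⁰₁ preorder P on ℕ there exists a uniformly computable sequence of sets (A_i) such that for all x, y: P x y if and only if A_x ⊆ A_y. -/
/-!
For each pair `a, b` with `¬P a b` we build, uniformly computably, an upset `U` of `P` with
`a ∈ U` and `b ∉ U`; then `A_x` is the set of (codes of) these upsets containing `x`.

The upset is built by deciding `0, 1, 2, …` in turn, with `a` counted as up and `b` as down from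
the start. The next element `k` goes up as soon as the enumeration of `¬P` has shown that `k` lies
below nothing that is down, and goes down as soon as it has shown that nothing up lies below `k`.
Deciding this way keeps every up element `P`-incomparable to every down element, so by
transitivity one of the two conditions is true of `k`, the enumeration eventually reveals it,
and every element gets decided.
-/

/-- A relation on ℕ is Π⁰₁ if its complement (as a subset of ℕ × ℕ) is r.e. -/
def Pi01Rel (R : ℕ → ℕ → Prop) : Prop := REPred fun p : ℕ × ℕ => ¬ R p.1 p.2

open Encodable Filter

theorem REPred.exists_primrec_stage {α : Type*} [Primcodable α] {p : α → Prop} (hp : REPred p) :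
    ∃ e : ℕ → α → Bool, Primrec₂ e ∧ (∀ {a s t}, s ≤ t → e s a = true → e t a = true) ∧
      ∀ a, p a ↔ ∃ s, e s a = true := by
  obtain ⟨c, hc⟩ := Nat.Partrec.Code.exists_code.1 hp
  refine ⟨fun s a => (c.evaln s (encode a)).isSome, ?_, ?_, fun a => ?_⟩
  · exact Primrec.option_isSome.comp <| Nat.Partrec.Code.primrec_evaln.comp <|
      (Primrec.fst.pair (Primrec.const c)).pair (Primrec.encode.comp Primrec.snd)
  · intro a s t hst h
    obtain ⟨y, hy⟩ := Option.isSome_iff_exists.1 h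
    exact Option.isSome_iff_exists.2 ⟨y, Nat.Partrec.Code.evaln_mono hst hy⟩
  · have hdom : (c.eval (encode a)).Dom ↔ p a := by simp [hc, Part.assert]
    simp only [← hdom, Part.dom_iff_mem, Nat.Partrec.Code.evaln_complete, Option.isSome_iff_exists,
      Option.mem_def]
    exact exists_comm

theorem Computable₂.exists_computable_of_exists_isSome {α σ : Type*} [Primcodable α]
    [Primcodable σ] {f : α → ℕ → Option σ} (hf : Computable₂ f) (hdom : ∀ a, ∃ n, (f a n).isSome) :
    ∃ g : α → σ, Computable g ∧ ∀ a, ∃ n, f a n = some (g a) := by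
  have hdom' (a : α) : (Nat.rfindOpt (f a)).Dom :=
    Nat.rfindOpt_dom.2 <| (hdom a).imp fun _ => Option.isSome_iff_exists.1
  exact ⟨fun a => (Nat.rfindOpt (f a)).get (hdom' a),
    (Partrec.rfindOpt hf).of_eq_tot fun a => Part.get_mem _,
    fun a => Nat.rfindOpt_spec (Part.get_mem (hdom' a))⟩

namespace SeparatingUpset

variable (e : ℕ → ℕ × ℕ → Bool) (a b : ℕ)

/- `e s (u, v) = true` says that the enumeration of the complement of `P` has listed `(u, v)` by
stage `s`. A list `L` records the decisions on `0, …, L.length - 1`, with `true` for up. -/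

def upper (L : List Bool) : Set ℕ := insert a {m | L[m]? = some true}

def lower (L : List Bool) : Set ℕ := insert b {m | L[m]? = some false}

def Separates (P : ℕ → ℕ → Prop) (L : List Bool) : Prop :=
  ∀ m ∈ upper a L, ∀ m' ∈ lower b L, ¬P m m'

def JoinsAt (s : ℕ) (L : List Bool) : Prop :=
  e s (L.length, b) = true ∧ ∀ m < L.length, L[m]? = some false → e s (L.length, m) = true

def LeavesAt (s : ℕ) (L : List Bool) : Prop :=
  e s (a, L.length) = true ∧ ∀ m < L.length, L[m]? = some true → e s (m, L.length) = true

instance (s : ℕ) (L : List Bool) : Decidable (JoinsAt e b s L) :=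
  inferInstanceAs (Decidable (_ ∧ _))

instance (s : ℕ) (L : List Bool) : Decidable (LeavesAt e a s L) :=
  inferInstanceAs (Decidable (_ ∧ _))

def next (s : ℕ) (L : List Bool) : List Bool :=
  if JoinsAt e b s L then L ++ [true] else if LeavesAt e a s L then L ++ [false] else L

def stage : ℕ → List Bool
  | 0 => []
  | s + 1 => next e a b s (stage s)

/-- The index `((a, b), s)` stands for the upset separating `a` from `b`, built only if stage `s`
has confirmed `¬P a b`; otherwise it stands for all of `ℕ`. -/
def approx (i : (ℕ × ℕ) × ℕ) (x N : ℕ) : Option Bool :=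
  if e i.2 i.1 then (stage e i.1.1 i.1.2 N)[x]? else some true

variable {e a b} {P : ℕ → ℕ → Prop} {L : List Bool} {s t m : ℕ}

theorem getElem?_concat_eq_some {v w : Bool} :
    (L ++ [v])[m]? = some w ↔ L[m]? = some w ∨ (m = L.length ∧ v = w) := by
  rcases lt_trichotomy m L.length with h | rfl | h
  · simp [List.getElem?_append_left h, h.ne]
  · simp
  · have : (L ++ [v])[m]? = none := List.getElem?_eq_none (by simp; omega)
    simp [this, List.getElem?_eq_none h.le, h.ne']

theorem lt_length_of_getElem?_eq_some {v : Bool} (h : L[m]? = some v) : m < L.length :=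
  (List.getElem?_eq_some_iff.1 h).1

theorem finite_setOf_getElem?_eq_some (L : List Bool) (v : Bool) :
    {m : ℕ | L[m]? = some v}.Finite :=
  (Set.finite_Iio L.length).subset fun _ hm => lt_length_of_getElem?_eq_some hm

theorem joinsAt_iff : JoinsAt e b s L ↔ ∀ m ∈ lower b L, e s (L.length, m) = true := by
  simp only [JoinsAt, lower, Set.mem_insert_iff, Set.mem_ofPred_eq, forall_eq_or_imp]
  exact and_congr_right fun _ =>
    ⟨fun h m hm => h m (lt_length_of_getElem?_eq_some hm) hm, fun h m _ => h m⟩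

theorem leavesAt_iff : LeavesAt e a s L ↔ ∀ m ∈ upper a L, e s (m, L.length) = true := by
  simp only [LeavesAt, upper, Set.mem_insert_iff, Set.mem_ofPred_eq, forall_eq_or_imp]
  exact and_congr_right fun _ =>
    ⟨fun h m hm => h m (lt_length_of_getElem?_eq_some hm) hm, fun h m _ => h m⟩

theorem prefix_next : L <+: next e a b s L := by
  unfold next; split_ifs <;> simp

theorem stage_prefix (h : s ≤ t) : stage e a b s <+: stage e a b t := by
  induction t, h using Nat.le_induction with
  | base => exact List.prefix_refl _
  | succ t _ ih => exact ih.trans prefix_next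

theorem getElem?_stage_of_le {v : Bool} (h : s ≤ t) (hv : (stage e a b s)[m]? = some v) :
    (stage e a b t)[m]? = some v := by
  obtain ⟨l, hl⟩ := stage_prefix (e := e) (a := a) (b := b) h
  rw [← hl, List.getElem?_append_left (lt_length_of_getElem?_eq_some hv), hv]

theorem length_next (h : JoinsAt e b s L ∨ LeavesAt e a s L) :
    (next e a b s L).length = L.length + 1 := by
  unfold next; split_ifs <;> simp_all

theorem upper_concat_true : upper a (L ++ [true]) = insert L.length (upper a L) := by
  ext m; simp [upper, getElem?_concat_eq_some]; tauto

theorem upper_concat_false : upper a (L ++ [false]) = upper a L := by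
  ext m; simp [upper, getElem?_concat_eq_some]

theorem lower_concat_true : lower b (L ++ [true]) = lower b L := by
  ext m; simp [lower, getElem?_concat_eq_some]

theorem lower_concat_false : lower b (L ++ [false]) = insert L.length (lower b L) := by
  ext m; simp [lower, getElem?_concat_eq_some]; tauto

theorem separates_next (hsound : ∀ s u v, e s (u, v) = true → ¬P u v)
    (hL : Separates a b P L) : Separates a b P (next e a b s L) := by
  unfold next
  split_ifs with hjoin hleave
  · rw [Separates, upper_concat_true, lower_concat_true]
    rintro m (rfl | hm) m' hm'
    · exact hsound _ _ _ (joinsAt_iff.1 hjoin m' hm')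
    · exact hL m hm m' hm'
  · rw [Separates, upper_concat_false, lower_concat_false]
    rintro m hm m' (rfl | hm')
    · exact hsound _ _ _ (leavesAt_iff.1 hleave m hm)
    · exact hL m hm m' hm'
  · exact hL

theorem separates_stage (hsound : ∀ s u v, e s (u, v) = true → ¬P u v) (hab : ¬P a b) :
    ∀ s, Separates a b P (stage e a b s)
  | 0 => by simpa [Separates, upper, lower, stage] using hab
  | s + 1 => separates_next hsound (separates_stage hsound hab s)

theorem eventually_joinsAt_or_leavesAt
    (hmono : ∀ {p s t}, s ≤ t → e s p = true → e t p = true)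
    (hcomplete : ∀ u v, ¬P u v → ∃ s, e s (u, v) = true)
    (htrans : ∀ x y z, P x y → P y z → P x z) (hL : Separates a b P L) :
    ∀ᶠ s in atTop, JoinsAt e b s L ∨ LeavesAt e a s L := by
  have hev : ∀ u v, ¬P u v → ∀ᶠ s in atTop, e s (u, v) = true := fun u v huv =>
    let ⟨s, hs⟩ := hcomplete u v huv
    eventually_atTop.2 ⟨s, fun _ ht => hmono ht hs⟩
  have hfin (c : ℕ) (v : Bool) : (insert c {m : ℕ | L[m]? = some v}).Finite :=
    (finite_setOf_getElem?_eq_some L v).insert c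
  by_cases hdown : ∀ m ∈ lower b L, ¬P L.length m
  · filter_upwards [(hfin b false).eventually_all.2 fun m hm => hev _ _ (hdown m hm)] with s hs
    exact Or.inl (joinsAt_iff.2 hs)
  · -- `L.length` lies below some down element, so by transitivity no up element lies below it.
    obtain ⟨m', hm', hkm'⟩ := not_forall₂.1 hdown
    have hup : ∀ m ∈ upper a L, ¬P m L.length := fun m hm hmk =>
      hL m hm m' hm' (htrans _ _ _ hmk (not_not.1 hkm'))
    filter_upwards [(hfin a true).eventually_all.2 fun m hm => hev _ _ (hup m hm)] with s hs
    exact Or.inr (leavesAt_iff.2 hs)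

theorem exists_lt_length_stage (hsound : ∀ s u v, e s (u, v) = true → ¬P u v)
    (hmono : ∀ {p s t}, s ≤ t → e s p = true → e t p = true)
    (hcomplete : ∀ u v, ¬P u v → ∃ s, e s (u, v) = true)
    (htrans : ∀ x y z, P x y → P y z → P x z) (hab : ¬P a b) (k : ℕ) :
    ∃ s, k < (stage e a b s).length := by
  have hgrow (s₀ : ℕ) : ∃ s, (stage e a b s₀).length < (stage e a b s).length := by
    obtain ⟨s, hs, hs₀⟩ := ((eventually_joinsAt_or_leavesAt (e := e) hmono hcomplete htrans
      (separates_stage hsound hab s₀)).and (eventually_ge_atTop s₀)).exists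
    by_cases hlt : (stage e a b s₀).length < (stage e a b s).length
    · exact ⟨s, hlt⟩
    · have heq : stage e a b s₀ = stage e a b s :=
        (stage_prefix hs₀).eq_of_length ((stage_prefix hs₀).length_le.antisymm (not_lt.1 hlt))
      refine ⟨s + 1, ?_⟩
      rw [stage, ← heq, length_next hs]
      exact Nat.lt_succ_self _
  induction k with
  | zero => simpa [stage] using hgrow 0
  | succ k ih =>
    obtain ⟨s, hs⟩ := ih
    obtain ⟨t, ht⟩ := hgrow s
    exact ⟨t, by omega⟩

theorem mem_upper_stage_of_le (h : s ≤ t) (hm : m ∈ upper a (stage e a b s)) :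
    m ∈ upper a (stage e a b t) :=
  hm.imp_right (getElem?_stage_of_le h)

theorem mem_lower_stage_of_le (h : s ≤ t) (hm : m ∈ lower b (stage e a b s)) :
    m ∈ lower b (stage e a b t) :=
  hm.imp_right (getElem?_stage_of_le h)

theorem not_rel_of_mem_upper_of_mem_lower (hsound : ∀ s u v, e s (u, v) = true → ¬P u v)
    (hab : ¬P a b) {m' : ℕ} (hm : m ∈ upper a (stage e a b s))
    (hm' : m' ∈ lower b (stage e a b t)) : ¬P m m' :=
  separates_stage hsound hab (max s t) m (mem_upper_stage_of_le (le_max_left s t) hm)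
    m' (mem_lower_stage_of_le (le_max_right s t) hm')

section Primrec

open Primrec

theorem primrecPred_forall_getElem?_eq_some {α : Type*} [Primcodable α] {L : α → List Bool}
    {c : α → ℕ → Prop} (hL : Primrec L) (hc : PrimrecRel c) (v : Bool) :
    PrimrecPred fun x => ∀ m < (L x).length, (L x)[m]? = some v → c x m := by
  have hm : PrimrecRel fun m x => (L x)[m]? = some v → c x m :=
    ((Primrec.eq.comp (list_getElem?.comp (hL.comp snd) fst) (const (some v))).not.or
      (hc.comp snd fst)).of_eq fun _ => imp_iff_not_or.symm
  exact (hm.forall_mem_list.comp (list_range.comp (list_length.comp hL)) Primrec.id).of_eq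
    fun _ => by simp only [List.mem_range, id]

variable (he : Primrec₂ e)
include he

theorem primrecPred_joinsAt :
    PrimrecPred fun q : ℕ × ℕ × List Bool => JoinsAt e q.1 q.2.1 q.2.2 := by
  have hlen : Primrec fun q : ℕ × ℕ × List Bool => q.2.2.length := list_length.comp (snd.comp snd)
  exact (Primrec.eq.comp (he.comp (fst.comp snd) (hlen.pair fst)) (const true)).and
    (primrecPred_forall_getElem?_eq_some (c := fun q m => e q.2.1 (q.2.2.length, m) = true)
      (snd.comp snd) (Primrec.eq.comp
        (he.comp (fst.comp (snd.comp fst)) ((hlen.comp fst).pair snd)) (const true)) false)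

theorem primrecPred_leavesAt :
    PrimrecPred fun q : ℕ × ℕ × List Bool => LeavesAt e q.1 q.2.1 q.2.2 := by
  have hlen : Primrec fun q : ℕ × ℕ × List Bool => q.2.2.length := list_length.comp (snd.comp snd)
  exact (Primrec.eq.comp (he.comp (fst.comp snd) (fst.pair hlen)) (const true)).and
    (primrecPred_forall_getElem?_eq_some (c := fun q m => e q.2.1 (m, q.2.2.length) = true)
      (snd.comp snd) (Primrec.eq.comp
        (he.comp (fst.comp (snd.comp fst)) (snd.pair (hlen.comp fst))) (const true)) true)

theorem primrec_stage : Primrec₂ fun (ab : ℕ × ℕ) (s : ℕ) => stage e ab.1 ab.2 s := by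
  have hnext : Primrec₂ fun (ab : ℕ × ℕ) (sL : ℕ × List Bool) => next e ab.1 ab.2 sL.1 sL.2 :=
    Primrec.ite ((primrecPred_joinsAt he).comp ((snd.comp fst).pair snd))
      (list_concat.comp (snd.comp snd) (const true))
      (Primrec.ite ((primrecPred_leavesAt he).comp ((fst.comp fst).pair snd))
        (list_concat.comp (snd.comp snd) (const false)) (snd.comp snd))
  refine (Primrec.nat_rec (Primrec.const []) hnext).of_eq fun ab s => ?_
  induction s with
  | zero => rfl
  | succ s ih => simp [stage, ih]

theorem primrec_approx :
    Primrec₂ fun (p : ((ℕ × ℕ) × ℕ) × ℕ) (N : ℕ) => approx e p.1 p.2 N :=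
  Primrec.ite
    (Primrec.eq.comp (he.comp (snd.comp (fst.comp fst)) (fst.comp (fst.comp fst))) (const true))
    (list_getElem?.comp ((primrec_stage he).comp (fst.comp (fst.comp fst)) snd) (snd.comp fst))
    (const (some true))

end Primrec

theorem exists_approx_isSome (hsound : ∀ s u v, e s (u, v) = true → ¬P u v)
    (hmono : ∀ {p s t}, s ≤ t → e s p = true → e t p = true)
    (hcomplete : ∀ u v, ¬P u v → ∃ s, e s (u, v) = true)
    (htrans : ∀ x y z, P x y → P y z → P x z) (i : (ℕ × ℕ) × ℕ) (x : ℕ) :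
    ∃ N, (approx e i x N).isSome := by
  unfold approx
  split_ifs with hi
  · obtain ⟨N, hN⟩ := exists_lt_length_stage hsound hmono hcomplete htrans (hsound _ _ _ hi) x
    exact ⟨N, by simpa using hN⟩
  · exact ⟨0, rfl⟩

theorem not_rel_of_approx (hsound : ∀ s u v, e s (u, v) = true → ¬P u v)
    {i : (ℕ × ℕ) × ℕ} {x y N N' : ℕ} (hx : approx e i x N = some true)
    (hy : approx e i y N' = some false) : ¬P x y := by
  unfold approx at hx hy
  split_ifs at hx hy with hi
  · exact not_rel_of_mem_upper_of_mem_lower hsound (hsound _ _ _ hi) (Or.inr hx) (Or.inr hy)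
  · simp at hy

theorem eq_true_of_approx_left (hsound : ∀ s u v, e s (u, v) = true → ¬P u v)
    (hrefl : ∀ x, P x x) {N : ℕ} {v : Bool} (hs : e s (a, b) = true)
    (hv : approx e ((a, b), s) a N = some v) :
    v = true := by
  simp only [approx, hs, if_true] at hv
  by_contra hfalse
  rw [Bool.not_eq_true] at hfalse
  exact not_rel_of_mem_upper_of_mem_lower (s := N) hsound (hsound _ _ _ hs) (Or.inl rfl)
    (Or.inr (hfalse ▸ hv)) (hrefl a)

theorem eq_false_of_approx_right (hsound : ∀ s u v, e s (u, v) = true → ¬P u v)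
    (hrefl : ∀ x, P x x) {N : ℕ} {v : Bool} (hs : e s (a, b) = true)
    (hv : approx e ((a, b), s) b N = some v) :
    v = false := by
  simp only [approx, hs, if_true] at hv
  by_contra htrue
  rw [Bool.not_eq_false] at htrue
  exact not_rel_of_mem_upper_of_mem_lower (t := N) hsound (hsound _ _ _ hs)
    (Or.inr (htrue ▸ hv)) (Or.inl rfl) (hrefl b)

end SeparatingUpset

open SeparatingUpset in
theorem Pi01Rel.exists_computable_separating_upsets {P : ℕ → ℕ → Prop} (hrefl : ∀ x, P x x)
    (htrans : ∀ x y z, P x y → P y z → P x z) (hPi : Pi01Rel P) :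
    ∃ U : (ℕ × ℕ) × ℕ → ℕ → Bool, Computable₂ U ∧
      (∀ i x y, P x y → U i x = true → U i y = true) ∧
      ∀ x y, ¬P x y → ∃ i, U i x = true ∧ U i y = false := by
  obtain ⟨e, he, hmono, hspec⟩ := REPred.exists_primrec_stage hPi
  have hsound (s u v) (h : e s (u, v) = true) : ¬P u v := (hspec (u, v)).2 ⟨s, h⟩
  have hcomplete (u v) (h : ¬P u v) : ∃ s, e s (u, v) = true := (hspec (u, v)).1 h
  obtain ⟨U, hU, hUapprox⟩ := (primrec_approx he).to_comp.exists_computable_of_exists_isSome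
    fun p => exists_approx_isSome hsound hmono hcomplete htrans p.1 p.2
  refine ⟨fun i x => U (i, x), hU.to₂, fun i x y hxy (hx : U (i, x) = true) => ?_,
    fun x y hxy => ?_⟩
  · obtain ⟨N, hN⟩ := hUapprox (i, x)
    obtain ⟨N', hN'⟩ := hUapprox (i, y)
    show U (i, y) = true
    by_contra hy
    rw [Bool.not_eq_true] at hy
    exact not_rel_of_approx hsound (hx ▸ hN) (hy ▸ hN') hxy
  · obtain ⟨s, hs⟩ := hcomplete x y hxy
    obtain ⟨N, hN⟩ := hUapprox (((x, y), s), x)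
    obtain ⟨N', hN'⟩ := hUapprox (((x, y), s), y)
    exact ⟨((x, y), s), eq_true_of_approx_left hsound hrefl hs hN,
      eq_false_of_approx_right hsound hrefl hs hN'⟩

/-- For every Π⁰₁ preorder `P` on ℕ there is a uniformly computable sequence of sets `A_i`
such that `P x y ↔ A_x ⊆ A_y`. -/
theorem pi01_preorder_as_inclusion (P : ℕ → ℕ → Prop)
    (hrefl : ∀ x, P x x) (htrans : ∀ x y z, P x y → P y z → P x z)
    (hPi : Pi01Rel P) :
    ∃ A : ℕ → ℕ → Bool,
      Computable (fun p : ℕ × ℕ => A p.1 p.2) ∧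
      ∀ x y, P x y ↔ ∀ n, A x n = true → A y n = true := by
  obtain ⟨U, hU, hup, hsep⟩ := hPi.exists_computable_separating_upsets hrefl htrans
  refine ⟨fun x n => U (Denumerable.ofNat _ n) x,
    hU.comp ((Computable.ofNat _).comp Computable.snd) Computable.fst, fun x y => ⟨?_, ?_⟩⟩
  · exact fun hxy n => hup _ x y hxy
  · intro hxy
    by_contra h
    obtain ⟨i, hx, hy⟩ := hsep x y h
    have hi := hxy (encode i)
    simp only [Denumerable.ofNat_encode] at hi
    exact Bool.false_ne_true (hy ▸ hi hx)
end

section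
/- If T_a and T_b are subtrees of {0,...,c}* such that each level is finite, and there exist root-preserving embeddings f : T_a → T_b and g : T_b → T_a, then T_a and T_b are isomorphic. In particular, for finite trees, any root-preserving embedding between bi-embeddable trees is an isomorphism. -/
/-- A set of strings is prefix-closed (a subtree) if it is closed under removing the last
symbol (the predecessor function `pred(wa) = w`, `pred(ε) = ε`). -/
def PrefixClosed {α : Type*} (T : Set (List α)) : Prop := ∀ w ∈ T, w.dropLast ∈ T

/-- `f` is a root-preserving embedding of the subtree `T` into the subtree `S`: an injective
map sending the root to the root and preserving the predecessor `List.dropLast`. -/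
def IsRootEmbedding {α : Type*} (T S : Set (List α)) (f : List α → List α) : Prop :=
  Set.MapsTo f T S ∧ Set.InjOn f T ∧ f [] = [] ∧ ∀ w ∈ T, f w.dropLast = (f w).dropLast

/-- A root embedding preserves lengths (levels). -/
lemma rootEmbedding_length {α : Type*} {T S : Set (List α)} {f : List α → List α}
    (hT : PrefixClosed T) (hrT : ([] : List α) ∈ T)
    (hf : IsRootEmbedding T S f) : ∀ w ∈ T, (f w).length = w.length := by
  obtain ⟨hmap, hinj, hroot, hpred⟩ := hf
  intro w hw
  induction w using List.reverseRecOn with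
  | nil => simp [hroot]
  | append_singleton l a ih =>
    have hl : l ∈ T := by have := hT _ hw; simpa using this
    have hfl : f l = (f (l ++ [a])).dropLast := by
      have := hpred _ hw; simpa using this
    have hne : f (l ++ [a]) ≠ [] := by
      intro h
      have : l ++ [a] = ([] : List α) := hinj hw hrT (by rw [h, hroot])
      simp at this
    have ihl := ih hl
    have h1 : 0 < (f (l ++ [a])).length := List.length_pos_iff.mpr hne
    have h2 : (f l).length = (f (l ++ [a])).length - 1 := by
      rw [hfl, List.length_dropLast]
    simp only [List.length_append, List.length_singleton]
    omega

/-- The level-`n` slice of a subtree of a finite alphabet is finite. -/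
lemma level_finite {α : Type*} [Finite α] (T : Set (List α)) (n : ℕ) :
    (T ∩ {w | w.length = n}).Finite :=
  (List.finite_length_eq α n).subset (Set.inter_subset_right)

/-- If the subtrees `Ta`, `Tb` of `{0,…,c}*` (whose levels are automatically finite) are
root-preserving bi-embeddable, then they are isomorphic; moreover for finite trees any
root-preserving embedding between them is itself an isomorphism. -/
theorem biembeddable_iso (c : ℕ) (Ta Tb : Set (List (Fin (c + 1))))
    (hTa : PrefixClosed Ta) (hTb : PrefixClosed Tb)
    (hra : ([] : List (Fin (c + 1))) ∈ Ta) (hrb : ([] : List (Fin (c + 1))) ∈ Tb)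
    (f g : List (Fin (c + 1)) → List (Fin (c + 1)))
    (hf : IsRootEmbedding Ta Tb f) (hg : IsRootEmbedding Tb Ta g) :
    (∃ φ, IsTreeIso Ta Tb φ) ∧ (Ta.Finite → IsTreeIso Ta Tb f) := by
  have hflen := rootEmbedding_length hTa hra hf
  have hglen := rootEmbedding_length hTb hrb hg
  set A : ℕ → Set (List (Fin (c + 1))) := fun n => Ta ∩ {w | w.length = n} with hA
  set B : ℕ → Set (List (Fin (c + 1))) := fun n => Tb ∩ {w | w.length = n} with hB
  have hAfin : ∀ n, (A n).Finite := fun n => level_finite Ta n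
  have hBfin : ∀ n, (B n).Finite := fun n => level_finite Tb n
  have hfmaps : ∀ n, Set.MapsTo f (A n) (B n) := by
    intro n w ⟨hw, hwlen⟩
    exact ⟨hf.1 hw, by rw [Set.mem_setOf_eq, hflen w hw]; exact hwlen⟩
  have hgmaps : ∀ n, Set.MapsTo g (B n) (A n) := by
    intro n w ⟨hw, hwlen⟩
    exact ⟨hg.1 hw, by rw [Set.mem_setOf_eq, hglen w hw]; exact hwlen⟩
  have hcard : ∀ n, (B n).ncard ≤ (A n).ncard := fun n =>
    Set.ncard_le_ncard_of_injOn g (hgmaps n) (hg.2.1.mono Set.inter_subset_left) (hAfin n)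
  have hcard' : ∀ n, (A n).ncard ≤ (B n).ncard := fun n =>
    Set.ncard_le_ncard_of_injOn f (hfmaps n) (hf.2.1.mono Set.inter_subset_left) (hBfin n)
  have hsurj : Set.SurjOn f Ta Tb := by
    intro v hv
    have hvB : v ∈ B v.length := ⟨hv, rfl⟩
    set n := v.length
    have himg : f '' (A n) = B n := by
      refine Set.eq_of_subset_of_ncard_le (Set.image_subset_iff.mpr (hfmaps n)) ?_ (hBfin n)
      rw [Set.ncard_image_of_injOn (hf.2.1.mono Set.inter_subset_left)]
      exact hcard n
    rw [← himg] at hvB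
    obtain ⟨w, hw, hfw⟩ := hvB
    exact ⟨w, hw.1, hfw⟩
  have hiso : IsTreeIso Ta Tb f := ⟨⟨hf.1, hf.2.1, hsurj⟩, hf.2.2.2⟩
  exact ⟨⟨f, hiso⟩, fun _ => hiso⟩
end
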